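/- arXiv:1108.2477 — 2 statements merged into one kernel-verified Lean document; each statement's English description precedes it below -/
import Mathlib

section
/- Let Θ_n=S_n≡Θ=ℝ^p and let 𝓜_n=(M_n,id) be a non-random Markov chain Monte Carlo procedure where M_n is the Markov measure generated by initial distribution μ_n and transition kernel K_n(x,dy)=A_n(x)R_n(x,dy)+(1−A_n(x))δ_x(dy), with R_n a probability transition kernel on Θ and A_n:Θ→(0,1) measurable. If (μ_n; n=1,2,…) is tight and sup_{x∈K}A_n(x)→0 as n→∞ for every compact set K⊂Θ, then (𝓜_n; n=1,2,…) is degenerate. -/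
/-!
Fix `δ > 0` and `ε > 0`. By tightness there is a compact `T` with `μ_n Tᶜ ≤ ε` for all `n`,
and for large `n` the acceptance probability is at most `ε` on `T`, so from any point of `T`
the chain stays put with probability at least `1 - ε`. Cut `T` into countably many measurable
cells of diameter `< δ`. The Markov property gives that the first `m` states lie in the cell of
the initial state with probability at least `(1 - ε)^m ≥ 1 - mε`; on that event the two
empirical measures are `δ`-close in the bounded Lipschitz distance, and they are always `2`-close.
Cells are used instead of the event that the chain does not move at all because the Markov
property is only available for a fixed target set.
-/

open MeasureTheory ProbabilityTheory Filter
open scoped ENNReal Topology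

noncomputable section

/-- The bounded Lipschitz distance between two measures on a pseudometric space. -/
def blDist {α : Type*} [MeasurableSpace α] [PseudoMetricSpace α]
    (μ ν : Measure α) : ℝ :=
  ⨆ f : {f : α → ℝ // LipschitzWith 1 f ∧ ∀ x, |f x| ≤ 1},
    |∫ x, f.1 x ∂μ - ∫ x, f.1 x ∂ν|

/-- The empirical measure `m⁻¹ ∑_{i<m} δ_{s(i)}` of the first `m` terms of a sequence. -/
def empMeas {Θ : Type*} [MeasurableSpace Θ] (m : ℕ) (s : ℕ → Θ) : Measure Θ :=
  (m : ℝ≥0∞)⁻¹ • ∑ i ∈ Finset.range m, Measure.dirac (s i)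

/-- `M` is the Markov measure on the path space generated by the initial distribution `μ`
and the transition (kernel) `K`: the first coordinate has law `μ`, and the chain has the
Markov property with one-step transition `K`. -/
def IsMarkovMeasureF {S : Type*} [MeasurableSpace S] (M : Measure (ℕ → S))
    (μ : Measure S) (K : S → Measure S) : Prop :=
  M.map (fun s => s 0) = μ ∧
  ∀ (m : ℕ) (B : Set (Fin (m + 1) → S)), MeasurableSet B →
    ∀ (A : Set S), MeasurableSet A →
      M {s | (fun i : Fin (m + 1) => s i.1) ∈ B ∧ s (m + 1) ∈ A}
        = ∫⁻ s in {s | (fun i : Fin (m + 1) => s i.1) ∈ B}, K (s m) A ∂M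

/-- Tightness of a sequence of measures. -/
def TightSeq {α : Type*} [MeasurableSpace α] [TopologicalSpace α]
    (μ : ℕ → Measure α) : Prop :=
  ∀ ε : ℝ, 0 < ε → ∃ K : Set α, IsCompact K ∧ ∀ n, μ n Kᶜ ≤ ENNReal.ofReal ε

open Function TopologicalSpace

section BoundedLipschitz

variable {α : Type*} [MeasurableSpace α]

lemma blDist_nonneg [PseudoMetricSpace α] (μ ν : Measure α) : 0 ≤ blDist μ ν :=
  Real.iSup_nonneg fun _ => abs_nonneg _

lemma integral_empMeas {f : α → ℝ} (hf : StronglyMeasurable f) (m : ℕ) (s : ℕ → α) :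
    ∫ x, f x ∂(empMeas m s) = (m : ℝ)⁻¹ * ∑ i ∈ Finset.range m, f (s i) := by
  rw [empMeas, integral_smul_measure,
    integral_finsetSum_measure fun i _ => integrable_dirac' hf enorm_lt_top]
  simp [integral_dirac' f _ hf, ENNReal.toReal_inv]

lemma abs_integral_empMeas_sub_le {f : α → ℝ} (hf : StronglyMeasurable f) {m : ℕ}
    (hm : 1 ≤ m) (s : ℕ → α) :
    |∫ x, f x ∂(empMeas m s) - ∫ x, f x ∂(empMeas 1 s)|
      ≤ (m : ℝ)⁻¹ * ∑ i ∈ Finset.range m, |f (s i) - f (s 0)| := by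
  have hm0 : (m : ℝ) ≠ 0 := by positivity
  have hmean : ∫ x, f x ∂(empMeas m s) - ∫ x, f x ∂(empMeas 1 s)
      = (m : ℝ)⁻¹ * ∑ i ∈ Finset.range m, (f (s i) - f (s 0)) := by
    rw [integral_empMeas hf, integral_empMeas hf, Finset.sum_sub_distrib]
    simp [field]
  rw [hmean, abs_mul, abs_of_nonneg (by positivity)]
  gcongr
  exact Finset.abs_sum_le_sum_abs _ _

variable [PseudoMetricSpace α] [OpensMeasurableSpace α]

lemma blDist_empMeas_le {m : ℕ} (hm : 1 ≤ m) (s : ℕ → α) {c : ℝ} (hc : 0 ≤ c)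
    (h : ∀ f : α → ℝ, LipschitzWith 1 f → (∀ x, |f x| ≤ 1) →
      ∀ i < m, |f (s i) - f (s 0)| ≤ c) :
    blDist (empMeas m s) (empMeas 1 s) ≤ c := by
  refine Real.iSup_le (fun ⟨f, hf1, hfb⟩ => ?_) hc
  have hm0 : (m : ℝ) ≠ 0 := by positivity
  calc _ ≤ (m : ℝ)⁻¹ * ∑ i ∈ Finset.range m, |f (s i) - f (s 0)| :=
        abs_integral_empMeas_sub_le hf1.continuous.stronglyMeasurable hm s
    _ ≤ (m : ℝ)⁻¹ * ∑ i ∈ Finset.range m, c := by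
        gcongr with i hi
        exact h f hf1 hfb i (Finset.mem_range.1 hi)
    _ = c := by simp [field]

lemma blDist_empMeas_le_two {m : ℕ} (hm : 1 ≤ m) (s : ℕ → α) :
    blDist (empMeas m s) (empMeas 1 s) ≤ 2 :=
  blDist_empMeas_le hm s zero_le_two fun f _ hfb i _ =>
    (abs_sub _ _).trans (by linarith [hfb (s i), hfb (s 0)])

lemma blDist_empMeas_le_of_dist_le {m : ℕ} (hm : 1 ≤ m) {s : ℕ → α} {c : ℝ}
    (hc : 0 ≤ c) (hs : ∀ i < m, dist (s i) (s 0) ≤ c) :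
    blDist (empMeas m s) (empMeas 1 s) ≤ c :=
  blDist_empMeas_le hm s hc fun f hf _ i hi => by
    simpa [Real.dist_eq] using (hf.dist_le_mul (s i) (s 0)).trans (by simpa using hs i hi)

end BoundedLipschitz

lemma exists_measurable_partition_dist_lt {α : Type*} [PseudoMetricSpace α]
    [MeasurableSpace α] [OpensMeasurableSpace α] [SeparableSpace α] [Nonempty α]
    {T : Set α} (hT : MeasurableSet T) {δ : ℝ} (hδ : 0 < δ) :
    ∃ C : ℕ → Set α, (∀ k, MeasurableSet (C k)) ∧ Pairwise (Disjoint on C) ∧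
      ⋃ k, C k = T ∧ ∀ k, ∀ x ∈ C k, ∀ y ∈ C k, dist x y < δ := by
  obtain ⟨u, hu⟩ := exists_dense_seq α
  set D : ℕ → Set α := fun k => T ∩ Metric.ball (u k) (δ / 2)
  refine ⟨disjointed D, .disjointed fun k => hT.inter measurableSet_ball, disjoint_disjointed D,
    ?_, fun k x hx y hy => ?_⟩
  · rw [iUnion_disjointed]
    refine subset_antisymm (Set.iUnion_subset fun k => Set.inter_subset_left) fun x hx => ?_
    obtain ⟨k, hk⟩ := hu.exists_dist_lt x (half_pos hδ)
    exact Set.mem_iUnion.2 ⟨k, hx, Metric.mem_ball.2 hk⟩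
  · have hx' := (disjointed_subset D k hx).2
    have hy' := (disjointed_subset D k hy).2
    rw [Metric.mem_ball] at hx' hy'
    linarith [dist_triangle_right x y (u k)]

lemma measurableSet_setOf_forall_lt_mem {S : Type*} [MeasurableSpace S] {C : Set S}
    (hC : MeasurableSet C) (r : ℕ) : MeasurableSet {s : ℕ → S | ∀ i < r, s i ∈ C} := by
  simp only [Set.ofPred_forall]
  exact .iInter fun i => .iInter fun _ => measurable_pi_apply i hC

namespace IsMarkovMeasureF

variable {S : Type*} [MeasurableSpace S] {M : Measure (ℕ → S)} {μ : Measure S}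
  {K : S → Measure S}

lemma isProbabilityMeasure (hM : IsMarkovMeasureF M μ K) [IsProbabilityMeasure μ] :
    IsProbabilityMeasure M := by
  have h := hM.1 ▸ measure_univ (μ := μ)
  rw [Measure.map_apply (measurable_pi_apply 0) .univ] at h
  exact ⟨h⟩

lemma pow_mul_le_measure_forall_lt_mem (hM : IsMarkovMeasureF M μ K) {C : Set S}
    (hC : MeasurableSet C) {q : ℝ≥0∞} (hq : ∀ x ∈ C, q ≤ K x C) (r : ℕ) :
    q ^ r * μ C ≤ M {s | ∀ i < r + 1, s i ∈ C} := by
  induction r with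
  | zero =>
    simp only [pow_zero, one_mul, zero_add, Nat.lt_one_iff, forall_eq]
    rw [← hM.1, Measure.map_apply (measurable_pi_apply 0) hC]
    exact le_rfl
  | succ r ih =>
    have hpath (s : ℕ → S) :
        (fun i : Fin (r + 1) => s i.1) ∈ Set.univ.pi (fun _ => C) ↔ ∀ i < r + 1, s i ∈ C :=
      by
      simp [Fin.forall_iff]
    have hstep := hM.2 r _ (.univ_pi fun _ => hC) C hC
    simp only [hpath] at hstep
    calc q ^ (r + 1) * μ C = q * (q ^ r * μ C) := by ring
      _ ≤ q * M {s | ∀ i < r + 1, s i ∈ C} := by gcongr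
      _ = ∫⁻ _ in {s | ∀ i < r + 1, s i ∈ C}, q ∂M := by rw [setLIntegral_const, mul_comm]
      _ ≤ ∫⁻ s in {s | ∀ i < r + 1, s i ∈ C}, K (s r) C ∂M :=
          setLIntegral_mono' (measurableSet_setOf_forall_lt_mem hC _)
            fun s hs => hq _ (hs r r.lt_succ_self)
      _ = M {s | ∀ i < r + 1 + 1, s i ∈ C} := by
          simp only [Nat.forall_lt_succ_right (n := r + 1), hstep]

lemma pow_mul_le_measure_iUnion_forall_lt_mem (hM : IsMarkovMeasureF M μ K) {C : ℕ → Set S}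
    (hCm : ∀ k, MeasurableSet (C k)) (hCd : Pairwise (Disjoint on C))
    {q : ℝ≥0∞} (hq : ∀ k, ∀ x ∈ C k, q ≤ K x (C k)) (r : ℕ) :
    q ^ r * μ (⋃ k, C k) ≤ M (⋃ k, {s | ∀ i < r + 1, s i ∈ C k}) := by
  have hpaths :
      Pairwise (Disjoint on fun k => {s : ℕ → S | ∀ i < r + 1, s i ∈ C k}) :=
    fun k j hkj => Set.disjoint_left.2 fun s hk hj =>
      Set.disjoint_left.1 (hCd hkj) (hk 0 r.succ_pos) (hj 0 r.succ_pos)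
  rw [measure_iUnion hCd hCm,
    measure_iUnion hpaths fun k => measurableSet_setOf_forall_lt_mem (hCm k) _,
    ← ENNReal.tsum_mul_left]
  exact ENNReal.tsum_le_tsum fun k => hM.pow_mul_le_measure_forall_lt_mem (hCm k) (hq k) r

end IsMarkovMeasureF

lemma ofReal_one_sub_le_mixture_dirac_apply {S : Type*} [MeasurableSpace S] (ρ : Measure S)
    {a ε : ℝ} (ha : a ≤ ε) {x : S} {C : Set S} (hx : x ∈ C) :
    ENNReal.ofReal (1 - ε)
      ≤ (ENNReal.ofReal a • ρ + ENNReal.ofReal (1 - a) • Measure.dirac x) C := by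
  simp only [Measure.add_apply, Measure.smul_apply, Measure.dirac_apply_of_mem hx, smul_eq_mul,
    mul_one]
  exact (ENNReal.ofReal_le_ofReal (by linarith)).trans le_add_self

lemma integral_le_add_mul_measureReal_compl {Ω : Type*} [MeasurableSpace Ω] {ν : Measure Ω}
    [IsProbabilityMeasure ν] {f : Ω → ℝ} (hf : 0 ≤ f) {G : Set Ω} (hG : MeasurableSet G)
    {b c : ℝ} (hc : 0 ≤ c) (hfG : ∀ s ∈ G, f s ≤ c) (hfb : ∀ s, f s ≤ b) :
    ∫ s, f s ∂ν ≤ c + b * ν.real Gᶜ := by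
  have hint : Integrable (Gᶜ.indicator fun _ => b) ν := (integrable_const b).indicator hG.compl
  have hle : ∀ s, f s ≤ c + Gᶜ.indicator (fun _ => b) s := by
    intro s
    by_cases hs : s ∈ G
    · simpa [hs] using hfG s hs
    · simpa [hs] using (hfb s).trans (le_add_of_nonneg_left hc)
  calc ∫ s, f s ∂ν ≤ ∫ s, c + Gᶜ.indicator (fun _ => b) s ∂ν :=
        integral_mono_of_nonneg (.of_forall hf) ((integrable_const c).add hint) (.of_forall hle)
    _ = c + b * ν.real Gᶜ := by
        rw [integral_add (integrable_const c) hint, integral_indicator_const b hG.compl]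
        simp [mul_comm]

theorem IsMarkovMeasureF.integral_blDist_empMeas_le {S : Type*} [PseudoMetricSpace S]
    [MeasurableSpace S] [OpensMeasurableSpace S] [SeparableSpace S] [Nonempty S]
    {M : Measure (ℕ → S)} {μ : Measure S} [IsProbabilityMeasure μ] {K : S → Measure S}
    (hM : IsMarkovMeasureF M μ K) {T : Set S} (hT : MeasurableSet T) {ε δ : ℝ}
    (hε₀ : 0 ≤ ε) (hε₁ : ε ≤ 1) (hδ : 0 < δ) (hμT : μ Tᶜ ≤ ENNReal.ofReal ε)
    (hK : ∀ x ∈ T, ∀ C, x ∈ C → ENNReal.ofReal (1 - ε) ≤ K x C) (r : ℕ) :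
    ∫ s, blDist (empMeas (r + 1) s) (empMeas 1 s) ∂M ≤ δ + 2 * (r + 1) * ε := by
  have := hM.isProbabilityMeasure
  obtain ⟨C, hCm, hCd, hCT, hCdist⟩ := exists_measurable_partition_dist_lt hT hδ
  set G := ⋃ k, {s : ℕ → S | ∀ i < r + 1, s i ∈ C k}
  have hGm : MeasurableSet G := .iUnion fun k => measurableSet_setOf_forall_lt_mem (hCm k) _
  have hμT' : ENNReal.ofReal (1 - ε) ≤ μ T := by
    have hTc := prob_compl_eq_one_sub (μ := μ) hT.compl
    rw [compl_compl] at hTc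
    rw [ENNReal.ofReal_sub _ hε₀, ENNReal.ofReal_one, hTc]
    exact tsub_le_tsub_left hμT 1
  have hMG : ENNReal.ofReal (1 - ε) ^ (r + 1) ≤ M G :=
    calc ENNReal.ofReal (1 - ε) ^ (r + 1) ≤ ENNReal.ofReal (1 - ε) ^ r * μ T := by
          rw [pow_succ]; gcongr
      _ ≤ M G := hCT ▸ hM.pow_mul_le_measure_iUnion_forall_lt_mem hCm hCd
          (fun k x hx => hK x (hCT ▸ Set.mem_iUnion_of_mem k hx) (C k) hx) r
  have hMGc : M.real Gᶜ ≤ (r + 1) * ε := by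
    rw [← ENNReal.ofReal_pow (by linarith), ENNReal.ofReal_le_iff_le_toReal (measure_ne_top M G)]
      at hMG
    rw [probReal_compl_eq_one_sub hGm]
    have hbern := one_add_mul_le_pow (show (-2 : ℝ) ≤ -ε by linarith) (r + 1)
    rw [mul_neg, ← sub_eq_add_neg, ← sub_eq_add_neg] at hbern
    push_cast at hbern
    change _ ≤ M.real G at hMG
    linarith
  have hblG : ∀ s ∈ G, blDist (empMeas (r + 1) s) (empMeas 1 s) ≤ δ := fun s hs => by
    obtain ⟨k, hk⟩ := Set.mem_iUnion.1 hs
    exact blDist_empMeas_le_of_dist_le r.succ_pos hδ.le fun i hi =>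
      (hCdist k _ (hk i hi) _ (hk 0 r.succ_pos)).le
  calc ∫ s, blDist (empMeas (r + 1) s) (empMeas 1 s) ∂M ≤ δ + 2 * M.real Gᶜ :=
        integral_le_add_mul_measureReal_compl (fun s => blDist_nonneg _ _) hGm hδ.le hblG
          fun s => blDist_empMeas_le_two r.succ_pos s
    _ ≤ δ + 2 * (r + 1) * ε := by linarith

theorem stmt1_general {p : ℕ}
    (μ : ℕ → Measure (EuclideanSpace ℝ (Fin p)))
    (hμ : ∀ n, IsProbabilityMeasure (μ n))
    (R : ℕ → Kernel (EuclideanSpace ℝ (Fin p)) (EuclideanSpace ℝ (Fin p)))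
    (A : ℕ → EuclideanSpace ℝ (Fin p) → ℝ)
    (hA01 : ∀ n x, A n x ∈ Set.Ioo (0 : ℝ) 1)
    (K : ℕ → Kernel (EuclideanSpace ℝ (Fin p)) (EuclideanSpace ℝ (Fin p)))
    (hKdef : ∀ n x, (K n) x
      = ENNReal.ofReal (A n x) • (R n) x
        + ENNReal.ofReal (1 - A n x) • Measure.dirac x)
    (M : ℕ → Measure (ℕ → EuclideanSpace ℝ (Fin p)))
    (hMarkov : ∀ n, IsMarkovMeasureF (M n) (μ n) (fun x => (K n) x))
    (htight : TightSeq μ)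
    (hAsup : ∀ Kc : Set (EuclideanSpace ℝ (Fin p)), IsCompact Kc →
      Tendsto (fun n => ⨆ x ∈ Kc, A n x) atTop (𝓝 0)) :
    ∀ m : ℕ, 1 ≤ m →
      Tendsto (fun n => ∫ s, blDist (empMeas m s) (empMeas 1 s) ∂(M n))
        atTop (𝓝 0) := by
  intro m hm
  obtain ⟨r, rfl⟩ := Nat.exists_eq_add_of_le' hm
  rw [Metric.tendsto_atTop]
  intro δ hδ
  obtain ⟨ε', hε'₀, hε'δ⟩ := exists_pos_mul_lt (half_pos hδ) (2 * (r + 1))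
  set ε := min ε' 1
  have hε₀ : 0 < ε := lt_min hε'₀ one_pos
  have hεδ : 2 * (r + 1) * ε < δ / 2 :=
    lt_of_le_of_lt (by gcongr; exact min_le_left _ _) hε'δ
  obtain ⟨T, hTc, hμT⟩ := htight ε hε₀
  obtain ⟨N, hN⟩ := eventually_atTop.1 ((hAsup T hTc).eventually (gt_mem_nhds hε₀))
  refine ⟨N, fun n hn => ?_⟩
  have hA : ∀ x ∈ T, A n x ≤ ε := fun x hx =>
    (le_ciSup₂ (f := fun y (_ : y ∈ T) => A n y) ⟨1, by
      simp only [mem_upperBounds, Set.mem_iUnion, Set.mem_range]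
      rintro _ ⟨y, _, rfl⟩
      exact (hA01 n y).2.le⟩ x hx).trans (hN n hn).le
  have hbound := (hMarkov n).integral_blDist_empMeas_le hTc.measurableSet hε₀.le
    (min_le_right _ _) (half_pos hδ) (hμT n) (fun x hx C hxC => by
      rw [hKdef]; exact ofReal_one_sub_le_mixture_dirac_apply _ (hA x hx) hxC) r
  rw [Real.dist_eq, sub_zero, abs_of_nonneg (integral_nonneg fun s => blDist_nonneg _ _)]
  linarith

/-- Let `Θ = ℝ^p` and let `𝓜_n = (M_n, id)` be the non-random Markov
chain Monte Carlo procedure where `M_n` is the Markov measure generated by the initial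
distribution `μ_n` and the transition kernel
`K_n(x,dy) = A_n(x) R_n(x,dy) + (1 - A_n(x)) δ_x(dy)`.  If `(μ_n)` is tight and
`sup_{x ∈ K} A_n(x) → 0` for every compact `K`, then `(𝓜_n)` is degenerate. -/
theorem stmt1 {p : ℕ}
    (μ : ℕ → Measure (EuclideanSpace ℝ (Fin p)))
    (hμ : ∀ n, IsProbabilityMeasure (μ n))
    (R : ℕ → Kernel (EuclideanSpace ℝ (Fin p)) (EuclideanSpace ℝ (Fin p)))
    (hR : ∀ n, IsMarkovKernel (R n))
    (A : ℕ → EuclideanSpace ℝ (Fin p) → ℝ)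
    (hAmeas : ∀ n, Measurable (A n))
    (hA01 : ∀ n x, A n x ∈ Set.Ioo (0 : ℝ) 1)
    (K : ℕ → Kernel (EuclideanSpace ℝ (Fin p)) (EuclideanSpace ℝ (Fin p)))
    (hK : ∀ n, IsMarkovKernel (K n))
    (hKdef : ∀ n x, (K n) x
      = ENNReal.ofReal (A n x) • (R n) x
        + ENNReal.ofReal (1 - A n x) • Measure.dirac x)
    (M : ℕ → Measure (ℕ → EuclideanSpace ℝ (Fin p)))
    (hMarkov : ∀ n, IsMarkovMeasureF (M n) (μ n) (fun x => (K n) x))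
    (htight : TightSeq μ)
    (hAsup : ∀ Kc : Set (EuclideanSpace ℝ (Fin p)), IsCompact Kc →
      Tendsto (fun n => ⨆ x ∈ Kc, A n x) atTop (𝓝 0)) :
    ∀ m : ℕ, 1 ≤ m →
      Tendsto (fun n => ∫ s, blDist (empMeas m s) (empMeas 1 s) ∂(M n))
        atTop (𝓝 0) :=
  stmt1_general μ hμ R A hA01 K hKdef M hMarkov htight hAsup
end
end

section
/- Under Assumption 1, the cumulative link model P(dxdy|θ)=p(xy|θ)ν(dxdy), with ν(dxdy)=P_X(dx)∑_{i=1}^c δ_i(dy) and p(xy|θ)=F(α^y+β^T x)−F(α^{y−1}+β^T x), is quadratic mean differentiable at every θ∈Θ. -/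
open MeasureTheory ProbabilityTheory Filter Asymptotics
open scoped ENNReal Topology

noncomputable section

/-- Linear predictor `βᵀx`. -/
def linpred {p : ℕ} (β x : Fin p → ℝ) : ℝ := ∑ i, β i * x i

/-- Extended cutoffs of the cumulative link model: `cutoff c α j = αʲ` for
`2 ≤ j ≤ c - 1` and `cutoff c α 1 = 0` (the dummy value `α¹ = 0`). -/
def cutoff (c : ℕ) (α : Fin (c - 2) → ℝ) (j : ℕ) : ℝ :=
  if h : 2 ≤ j ∧ j ≤ c - 1 then α ⟨j - 2, by omega⟩ else 0

/-- Cumulative probabilities `P(y ≤ j | x) = F(αʲ + βᵀx)` with the conventions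
`α⁰ = -∞` and `α^c = +∞`. -/
def cumP (F : ℝ → ℝ) (p c : ℕ) (θ : (Fin (c - 2) → ℝ) × (Fin p → ℝ))
    (x : Fin p → ℝ) (j : ℕ) : ℝ :=
  if j = 0 then 0 else if c ≤ j then 1 else F (cutoff c θ.1 j + linpred θ.2 x)

/-- Cell probabilities `p(x, y | θ) = F(α^y + βᵀx) - F(α^{y-1} + βᵀx)`; `y : Fin c`
encodes the category `y + 1 ∈ {1, …, c}`. -/
def cellP (F : ℝ → ℝ) (p c : ℕ) (θ : (Fin (c - 2) → ℝ) × (Fin p → ℝ))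
    (x : Fin p → ℝ) (y : Fin c) : ℝ :=
  cumP F p c θ x (y.1 + 1) - cumP F p c θ x y.1

/-- Parameter space `Θ = {(α², …, α^{c-1}, β) : 0 < α² < ⋯ < α^{c-1}}`. -/
def ParamSet (p c : ℕ) : Set ((Fin (c - 2) → ℝ) × (Fin p → ℝ)) :=
  {θ | StrictMono θ.1 ∧ ∀ i, 0 < θ.1 i}

/-- The dominating measure `ν(dx dy) = P_X(dx) ∑_{i=1}^c δ_i(dy)`. -/
def nuMeas {p : ℕ} (PX : Measure (Fin p → ℝ)) (c : ℕ) :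
    Measure ((Fin p → ℝ) × Fin c) :=
  PX.prod Measure.count

/-- The law `P(dx dy | θ) = p(x, y | θ) ν(dx dy)` of one observation. -/
def modelP (F : ℝ → ℝ) {p : ℕ} (PX : Measure (Fin p → ℝ)) (c : ℕ)
    (θ : (Fin (c - 2) → ℝ) × (Fin p → ℝ)) : Measure ((Fin p → ℝ) × Fin c) :=
  (nuMeas PX c).withDensity (fun z => ENNReal.ofReal (cellP F p c θ z.1 z.2))

/-- The law `P_n(dx_n dy_n | θ)` of `n` i.i.d. observations. -/
def modelPn (F : ℝ → ℝ) {p : ℕ} (PX : Measure (Fin p → ℝ)) (c n : ℕ)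
    (θ : (Fin (c - 2) → ℝ) × (Fin p → ℝ)) :
    Measure (Fin n → (Fin p → ℝ) × Fin c) :=
  Measure.pi (fun _ => modelP F PX c θ)

/-- **Assumption 1** of the paper. -/
structure Assm1 {p : ℕ} (F f : ℝ → ℝ) (PX : Measure (Fin p → ℝ)) : Prop where
  f_cont : Continuous f
  f_pos : ∀ x, 0 < f x
  F_eq : ∀ x, F x = ∫ y in Set.Iic x, f y
  F_cdf : Tendsto F atTop (𝓝 1)
  supp_compact : ∃ K : Set (Fin p → ℝ), IsCompact K ∧ PX Kᶜ = 0
  nondeg : ∀ (a : ℝ) (b : Fin p → ℝ),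
    (∀ᵐ x ∂PX, a + linpred b x = 0) → a = 0 ∧ b = 0

/-!
Every cell probability is `F(ℓ₁ θ) - F(ℓ₀ θ)` for linear forms `ℓ₀, ℓ₁` of `θ` depending
continuously on `x`, and is positive on the open set `Θ`; hence `θ ↦ √p(x y|θ)` is `C¹` near
`θ`, with derivative jointly continuous in `(θ, x)`. By the mean value inequality and
compactness of the support of `P_X`, the first-order Taylor remainder is `o(|h|)` uniformly in
`x`, and integrating its square against the finite measure `ν` gives `o(|h|²)`.
-/

open Set

section CDF

variable {F f : ℝ → ℝ}

theorem integrableOn_Iic_of_tendsto_integral_Iic {l : ℝ}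
    (hf : Tendsto (fun x => ∫ y in Iic x, f y) atTop (𝓝 l)) (hl : l ≠ 0) (x : ℝ) :
    IntegrableOn f (Iic x) := by
  obtain ⟨x₀, hx₀, hxx₀⟩ := ((hf.eventually_ne hl).and (eventually_ge_atTop x)).exists
  have hx₀' : IntegrableOn f (Iic x₀) := not_imp_comm.1 integral_undef hx₀
  exact hx₀'.mono_set (Iic_subset_Iic.2 hxx₀)

theorem eq_add_intervalIntegral_of_integral_Iic
    (hFeq : ∀ x, F x = ∫ y in Iic x, f y) (hFt : Tendsto F atTop (𝓝 1))
    (a b : ℝ) : F b = F a + ∫ t in a..b, f t := by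
  have hint := integrableOn_Iic_of_tendsto_integral_Iic (f := f)
    (by simpa only [← hFeq] using hFt) one_ne_zero
  rw [← intervalIntegral.integral_Iic_sub_Iic (hint a) (hint b), ← hFeq, ← hFeq]
  ring

theorem hasDerivAt_of_integral_Iic
    (hFeq : ∀ x, F x = ∫ y in Iic x, f y) (hFt : Tendsto F atTop (𝓝 1))
    (hfc : Continuous f) (x : ℝ) : HasDerivAt F (f x) x := by
  have hF : F = fun b => F 0 + ∫ t in (0 : ℝ)..b, f t :=
    funext (eq_add_intervalIntegral_of_integral_Iic hFeq hFt 0)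
  rw [hF]
  exact ((hfc.integral_hasStrictDerivAt 0 x).hasDerivAt).const_add _

theorem strictMono_of_integral_Iic
    (hFeq : ∀ x, F x = ∫ y in Iic x, f y) (hFt : Tendsto F atTop (𝓝 1))
    (hfc : Continuous f) (hfp : ∀ x, 0 < f x) :
    StrictMono F := fun a b hab => by
  rw [eq_add_intervalIntegral_of_integral_Iic hFeq hFt a b, lt_add_iff_pos_right]
  exact intervalIntegral.intervalIntegral_pos_of_pos (hfc.intervalIntegrable a b) hfp hab

theorem mem_Ioo_zero_one_of_integral_Iic
    (hFeq : ∀ x, F x = ∫ y in Iic x, f y) (hFt : Tendsto F atTop (𝓝 1))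
    (hfc : Continuous f) (hfp : ∀ x, 0 < f x) (x : ℝ) :
    F x ∈ Ioo 0 1 := by
  have hmono := strictMono_of_integral_Iic hFeq hFt hfc hfp
  have hnonneg : 0 ≤ F (x - 1) := by
    rw [hFeq]; exact setIntegral_nonneg measurableSet_Iic fun y _ => (hfp y).le
  exact ⟨hnonneg.trans_lt (hmono (by linarith)),
    (hmono (lt_add_one x)).trans_le (hmono.monotone.ge_of_tendsto hFt _)⟩

end CDF

theorem eventually_forall_norm_sub_sub_le_of_hasFDerivAt {E G X : Type*}
    [NormedAddCommGroup E] [NormedSpace ℝ E] [NormedAddCommGroup G] [NormedSpace ℝ G]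
    [TopologicalSpace X] {g : E → X → G} {D : E → X → E →L[ℝ] G} {θ : E} {K : Set X}
    (hK : IsCompact K) (hg : ∀ᶠ θ' in 𝓝 θ, ∀ x ∈ K, HasFDerivAt (g · x) (D θ' x) θ')
    (hD : ∀ x ∈ K, ContinuousAt (fun q : E × X => D q.1 q.2) (θ, x)) {ε : ℝ} (hε : 0 < ε) :
    ∀ᶠ h in 𝓝 0, ∀ x ∈ K, ‖g (θ + h) x - g θ x - D θ x h‖ ≤ ε * ‖h‖ := by
  have hclose : ∀ᶠ θ' in 𝓝 θ, ∀ x ∈ K, ‖D θ' x - D θ x‖ ≤ ε := by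
    refine hK.eventually_forall_of_forall_eventually fun x hx => ?_
    have hnear := (hD x hx).eventually (Metric.ball_mem_nhds _ (half_pos hε))
    have hslice : Tendsto (fun q : E × X => (θ, q.2)) (𝓝 (θ, x)) (𝓝 (θ, x)) :=
      (continuous_const.prodMk continuous_snd).tendsto' _ _ rfl
    filter_upwards [hnear, hslice.eventually hnear] with q h₁ h₂
    rw [← dist_eq_norm]
    linarith [dist_triangle_right (D q.1 q.2) (D θ q.2) (D θ x), Metric.mem_ball.1 h₁,
      Metric.mem_ball.1 h₂]
  obtain ⟨δ, hδ, hball⟩ := Metric.eventually_nhds_iff_ball.1 (hg.and hclose)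
  filter_upwards [Metric.ball_mem_nhds 0 hδ] with h hh x hx
  have hθh : θ + h ∈ Metric.ball θ δ := by simpa using hh
  simpa using (convex_ball θ δ).norm_image_sub_le_of_norm_hasFDerivWithin_le'
    (fun θ' hθ' => ((hball θ' hθ').1 x hx).hasFDerivWithinAt)
    (fun θ' hθ' => (hball θ' hθ').2 x hx) (Metric.mem_ball_self hδ) hθh

theorem isLittleO_integral_sq_of_eventually_ae_abs_le {α E : Type*} [MeasurableSpace α]
    [NormedAddCommGroup E] {μ : Measure α} [IsFiniteMeasure μ] {R : E → α → ℝ}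
    (hR : ∀ ε > 0, ∀ᶠ h in 𝓝 0, ∀ᵐ z ∂μ, |R h z| ≤ ε * ‖h‖) :
    (fun h => ∫ z, R h z ^ 2 ∂μ) =o[𝓝 0] fun h => ‖h‖ ^ 2 := by
  refine isLittleO_iff.2 fun ε hε => ?_
  set M := μ.real univ + 1
  have hM : 0 < M := by positivity
  filter_upwards [hR √(ε / M) (by positivity)] with h hh
  have hsq : ∀ᵐ z ∂μ, R h z ^ 2 ≤ ε / M * ‖h‖ ^ 2 := hh.mono fun z hz => by
    calc R h z ^ 2 = |R h z| ^ 2 := (sq_abs _).symm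
      _ ≤ (√(ε / M) * ‖h‖) ^ 2 := by gcongr
      _ = ε / M * ‖h‖ ^ 2 := by rw [mul_pow, Real.sq_sqrt (by positivity)]
  -- `R h ^ 2` need not be integrable: if it is not, its integral is `0`.
  have hle : ∫ z, R h z ^ 2 ∂μ ≤ μ.real univ * (ε / M * ‖h‖ ^ 2) := by
    simpa using integral_mono_of_nonneg (ae_of_all _ fun z => sq_nonneg (R h z))
      (integrable_const _) hsq
  rw [Real.norm_of_nonneg (integral_nonneg fun z => sq_nonneg _), norm_pow, norm_norm]
  calc ∫ z, R h z ^ 2 ∂μ ≤ μ.real univ * (ε / M * ‖h‖ ^ 2) := hle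
    _ ≤ M * (ε / M * ‖h‖ ^ 2) := by gcongr; linarith
    _ = ε * ‖h‖ ^ 2 := by field_simp

section DualCoords

variable {m n : ℕ}

def dualCoords (L : ((Fin m → ℝ) × (Fin n → ℝ)) →L[ℝ] ℝ) : (Fin m → ℝ) × (Fin n → ℝ) :=
  (fun i => L (Pi.single i 1, 0), fun j => L (0, Pi.single j 1))

theorem apply_eq_sum_mul_dualCoords (L : ((Fin m → ℝ) × (Fin n → ℝ)) →L[ℝ] ℝ)
    (h : (Fin m → ℝ) × (Fin n → ℝ)) :
    L h = ∑ i, h.1 i * (dualCoords L).1 i + ∑ j, h.2 j * (dualCoords L).2 j := by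
  have hsplit : h = (∑ i, h.1 i • (Pi.single i 1, 0)) + ∑ j, h.2 j • (0, Pi.single j 1) := by
    ext k <;> simp [Prod.fst_sum, Prod.snd_sum, Finset.sum_apply, Pi.single_apply]
  conv_lhs => rw [hsplit, map_add, map_sum, map_sum]
  simp only [map_smul, smul_eq_mul, dualCoords]

theorem continuous_dualCoords :
    Continuous (dualCoords : (((Fin m → ℝ) × (Fin n → ℝ)) →L[ℝ] ℝ) → _) :=
  (continuous_pi fun _ => (ContinuousLinearMap.apply ℝ ℝ _).continuous).prodMk
    (continuous_pi fun _ => (ContinuousLinearMap.apply ℝ ℝ _).continuous)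

end DualCoords

section Model

variable {p c : ℕ}

abbrev ParamSpace (p c : ℕ) : Type := (Fin (c - 2) → ℝ) × (Fin p → ℝ)

def predictorCLM (c : ℕ) (x : Fin p → ℝ) (j : ℕ) : ParamSpace p c →L[ℝ] ℝ :=
  (if h : 2 ≤ j ∧ j ≤ c - 1 then
      (ContinuousLinearMap.proj (R := ℝ) (φ := fun _ : Fin (c - 2) => ℝ)
        ⟨j - 2, by omega⟩).comp (ContinuousLinearMap.fst ℝ _ _)
    else 0)
  + ∑ i, x i • (ContinuousLinearMap.proj (R := ℝ) (φ := fun _ : Fin p => ℝ) i).comp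
      (ContinuousLinearMap.snd ℝ _ _)

theorem predictorCLM_apply (x : Fin p → ℝ) (j : ℕ) (θ : ParamSpace p c) :
    predictorCLM c x j θ = cutoff c θ.1 j + linpred θ.2 x := by
  unfold predictorCLM cutoff linpred
  split_ifs <;> simp [mul_comm]

theorem continuous_predictorCLM (j : ℕ) :
    Continuous fun x : Fin p → ℝ => predictorCLM c x j := by
  unfold predictorCLM
  fun_prop

def cumLink (F : ℝ → ℝ) (c j : ℕ) (t : ℝ) : ℝ :=
  if j = 0 then 0 else if c ≤ j then 1 else F t

def cumLinkDeriv (f : ℝ → ℝ) (c j : ℕ) (t : ℝ) : ℝ :=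
  if j = 0 then 0 else if c ≤ j then 0 else f t

theorem hasDerivAt_cumLink {F f : ℝ → ℝ} (hF : ∀ t, HasDerivAt F (f t) t) (c j : ℕ) (t : ℝ) :
    HasDerivAt (cumLink F c j) (cumLinkDeriv f c j t) t := by
  unfold cumLink cumLinkDeriv
  split_ifs
  exacts [hasDerivAt_const _ _, hasDerivAt_const _ _, hF t]

theorem continuous_cumLink {F : ℝ → ℝ} (hF : Continuous F) (c j : ℕ) :
    Continuous (cumLink F c j) := by
  unfold cumLink
  split_ifs <;> fun_prop

theorem continuous_cumLinkDeriv {f : ℝ → ℝ} (hf : Continuous f) (c j : ℕ) :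
    Continuous (cumLinkDeriv f c j) := by
  unfold cumLinkDeriv
  split_ifs <;> fun_prop

theorem cellP_eq (F : ℝ → ℝ) (θ : ParamSpace p c) (x : Fin p → ℝ) (y : Fin c) :
    cellP F p c θ x y = cumLink F c (y + 1) (predictorCLM c x (y + 1) θ)
      - cumLink F c y (predictorCLM c x y θ) := by
  simp only [cellP, predictorCLM_apply]
  rfl

def cellDeriv (f : ℝ → ℝ) (c : ℕ) (θ : ParamSpace p c) (x : Fin p → ℝ) (y : Fin c) :
    ParamSpace p c →L[ℝ] ℝ :=
  cumLinkDeriv f c (y + 1) (predictorCLM c x (y + 1) θ) • predictorCLM c x (y + 1)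
    - cumLinkDeriv f c y (predictorCLM c x y θ) • predictorCLM c x y

theorem hasFDerivAt_cellP {F f : ℝ → ℝ} (hF : ∀ t, HasDerivAt F (f t) t)
    (θ : ParamSpace p c) (x : Fin p → ℝ) (y : Fin c) :
    HasFDerivAt (fun θ' => cellP F p c θ' x y) (cellDeriv f c θ x y) θ := by
  simp only [cellP_eq]
  exact ((hasDerivAt_cumLink hF c _ _).comp_hasFDerivAt θ (predictorCLM c x _).hasFDerivAt).sub
    ((hasDerivAt_cumLink hF c _ _).comp_hasFDerivAt θ (predictorCLM c x _).hasFDerivAt)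

theorem continuous_cellP {F : ℝ → ℝ} (hF : Continuous F) (y : Fin c) :
    Continuous fun q : ParamSpace p c × (Fin p → ℝ) => cellP F p c q.1 q.2 y := by
  simp only [cellP_eq]
  have hpred (j : ℕ) :
      Continuous fun q : ParamSpace p c × (Fin p → ℝ) => predictorCLM c q.2 j q.1 :=
    ((continuous_predictorCLM j).comp continuous_snd).clm_apply continuous_fst
  exact ((continuous_cumLink hF c _).comp (hpred _)).sub
    ((continuous_cumLink hF c _).comp (hpred _))

theorem continuous_cellDeriv {f : ℝ → ℝ} (hf : Continuous f) (y : Fin c) :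
    Continuous fun q : ParamSpace p c × (Fin p → ℝ) => cellDeriv f c q.1 q.2 y := by
  have hpred (j : ℕ) :
      Continuous fun q : ParamSpace p c × (Fin p → ℝ) => predictorCLM c q.2 j :=
    (continuous_predictorCLM j).comp continuous_snd
  have hterm (j : ℕ) : Continuous fun q : ParamSpace p c × (Fin p → ℝ) =>
      cumLinkDeriv f c j (predictorCLM c q.2 j q.1) • predictorCLM c q.2 j :=
    ((continuous_cumLinkDeriv hf c j).comp ((hpred j).clm_apply continuous_fst)).smul (hpred j)
  exact (hterm _).sub (hterm _)

def sqrtCellDeriv (F f : ℝ → ℝ) (c : ℕ) (θ : ParamSpace p c) (x : Fin p → ℝ) (y : Fin c) :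
    ParamSpace p c →L[ℝ] ℝ :=
  (1 / (2 * √(cellP F p c θ x y))) • cellDeriv f c θ x y

theorem hasFDerivAt_sqrt_cellP {F f : ℝ → ℝ} (hF : ∀ t, HasDerivAt F (f t) t)
    {θ : ParamSpace p c} {x : Fin p → ℝ} {y : Fin c} (hθ : 0 < cellP F p c θ x y) :
    HasFDerivAt (fun θ' => √(cellP F p c θ' x y)) (sqrtCellDeriv F f c θ x y) θ :=
  (hasFDerivAt_cellP hF θ x y).sqrt hθ.ne'

theorem continuousAt_sqrtCellDeriv {F f : ℝ → ℝ} (hF : Continuous F) (hf : Continuous f)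
    {θ : ParamSpace p c} {x : Fin p → ℝ} {y : Fin c} (hθ : 0 < cellP F p c θ x y) :
    ContinuousAt (fun q : ParamSpace p c × (Fin p → ℝ) => sqrtCellDeriv F f c q.1 q.2 y)
      (θ, x) := by
  have hden : 2 * √(cellP F p c θ x y) ≠ 0 := by positivity
  exact (continuousAt_const.div
    (continuousAt_const.mul (continuous_cellP hF y).continuousAt.sqrt) hden).smul
    (continuous_cellDeriv hf y).continuousAt

theorem cutoff_lt_cutoff_succ {θ : ParamSpace p c} (hθ : θ ∈ ParamSet p c) {j : ℕ}
    (hj : 1 ≤ j) (hjc : j + 1 < c) : cutoff c θ.1 j < cutoff c θ.1 (j + 1) := by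
  obtain ⟨hmono, hpos⟩ := hθ
  unfold cutoff
  rcases eq_or_lt_of_le hj with rfl | hj
  · rw [dif_neg (by omega), dif_pos (by omega)]
    exact hpos _
  · rw [dif_pos (by omega), dif_pos (by omega)]
    exact hmono (Fin.mk_lt_mk.2 (by omega))

theorem cumP_lt_cumP_succ {F : ℝ → ℝ} (hFmono : StrictMono F) (hF01 : ∀ t, F t ∈ Ioo 0 1)
    {θ : ParamSpace p c} (hθ : θ ∈ ParamSet p c) (x : Fin p → ℝ) {j : ℕ} (hj : j < c) :
    cumP F p c θ x j < cumP F p c θ x (j + 1) := by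
  unfold cumP
  rcases Nat.eq_zero_or_pos j with rfl | hj0
  · rw [if_pos rfl, if_neg (Nat.succ_ne_zero 0)]
    split_ifs
    exacts [one_pos, (hF01 _).1]
  · rw [if_neg (by omega), if_neg (by omega), if_neg (by omega)]
    split_ifs with hjc
    · exact (hF01 _).2
    · exact hFmono (add_lt_add_left (cutoff_lt_cutoff_succ hθ hj0 (by omega)) _)

theorem cellP_pos {F : ℝ → ℝ} (hFmono : StrictMono F) (hF01 : ∀ t, F t ∈ Ioo 0 1)
    {θ : ParamSpace p c} (hθ : θ ∈ ParamSet p c) (x : Fin p → ℝ) (y : Fin c) :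
    0 < cellP F p c θ x y :=
  sub_pos.2 (cumP_lt_cumP_succ hFmono hF01 hθ x y.2)

theorem isOpen_paramSet : IsOpen (ParamSet p c) := by
  have hmono : IsOpen {θ : ParamSpace p c | ∀ i j, i < j → θ.1 i < θ.1 j} := by
    simp only [ofPred_forall]
    exact isOpen_iInter_of_finite fun i => isOpen_iInter_of_finite fun j =>
      isOpen_iInter_of_finite fun _ => isOpen_lt (by fun_prop) (by fun_prop)
  have hpos : IsOpen {θ : ParamSpace p c | ∀ i, 0 < θ.1 i} := by
    simp only [ofPred_forall]
    exact isOpen_iInter_of_finite fun i => isOpen_lt continuous_const (by fun_prop)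
  exact hmono.inter hpos

instance {PX : Measure (Fin p → ℝ)} [IsFiniteMeasure PX] : IsFiniteMeasure (nuMeas PX c) := by
  unfold nuMeas
  infer_instance

theorem ae_nuMeas_fst_mem {PX : Measure (Fin p → ℝ)} {K : Set (Fin p → ℝ)} (hK : PX Kᶜ = 0) :
    ∀ᵐ z ∂(nuMeas PX c), z.1 ∈ K := by
  have hset : {z : (Fin p → ℝ) × Fin c | z.1 ∉ K} = Kᶜ ×ˢ univ := by ext; simp
  rw [ae_iff, hset, nuMeas, Measure.prod_prod, hK, zero_mul]

end Model

theorem stmt8_general {p c : ℕ} (F f : ℝ → ℝ)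
    (PX : Measure (Fin p → ℝ)) [IsProbabilityMeasure PX]
    (hA : Assm1 F f PX) :
    ∀ θ ∈ ParamSet p c,
      ∃ η : ((Fin p → ℝ) × Fin c) → ((Fin (c - 2) → ℝ) × (Fin p → ℝ)),
        Measurable η ∧
        (fun h : (Fin (c - 2) → ℝ) × (Fin p → ℝ) =>
            ∫ z, (Real.sqrt (cellP F p c (θ + h) z.1 z.2)
                  - Real.sqrt (cellP F p c θ z.1 z.2)
                  - (∑ i, h.1 i * (η z).1 i + ∑ j, h.2 j * (η z).2 j)) ^ 2
              ∂(nuMeas PX c))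
          =o[𝓝 0] (fun h => ‖h‖ ^ 2) := by
  intro θ hθ
  have hF := hasDerivAt_of_integral_Iic hA.F_eq hA.F_cdf hA.f_cont
  have hFc : Continuous F := continuous_iff_continuousAt.2 fun t => (hF t).continuousAt
  have hpos : ∀ θ' ∈ ParamSet p c, ∀ x y, 0 < cellP F p c θ' x y := fun θ' hθ' =>
    cellP_pos (strictMono_of_integral_Iic hA.F_eq hA.F_cdf hA.f_cont hA.f_pos)
      (mem_Ioo_zero_one_of_integral_Iic hA.F_eq hA.F_cdf hA.f_cont hA.f_pos) hθ'
  have hD (x : Fin p → ℝ) (y : Fin c) :=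
    continuousAt_sqrtCellDeriv hFc hA.f_cont (hpos θ hθ x y)
  obtain ⟨K, hK, hKc⟩ := hA.supp_compact
  refine ⟨fun z => dualCoords (sqrtCellDeriv F f c θ z.1 z.2), ?_, ?_⟩
  · refine measurable_from_prod_countable_left fun y => Continuous.measurable ?_
    exact continuous_dualCoords.comp (continuous_iff_continuousAt.2 fun x =>
      (hD x y).comp (continuous_const.prodMk continuous_id).continuousAt)
  simp_rw [← apply_eq_sum_mul_dualCoords]
  refine isLittleO_integral_sq_of_eventually_ae_abs_le fun ε hε => ?_
  have hTaylor := eventually_all.2 fun y : Fin c =>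
    eventually_forall_norm_sub_sub_le_of_hasFDerivAt hK
      ((isOpen_paramSet.eventually_mem hθ).mono fun θ' hθ' x _ =>
        hasFDerivAt_sqrt_cellP hF (hpos θ' hθ' x y))
      (fun x _ => hD x y) hε
  filter_upwards [hTaylor] with h hh
  filter_upwards [ae_nuMeas_fst_mem hKc] with z hz
  exact hh z.2 z.1 hz

/-- Proposition: quadratic mean differentiability.
Under Assumption 1, the cumulative link model `P(dx dy|θ) = p(x y|θ) ν(dx dy)` is
quadratic mean differentiable at every `θ ∈ Θ`: there is a measurable `η(· |θ)` with
`∫ |√p(·|θ+h) - √p(·|θ) - hᵀη(·|θ)|² dν = o(|h|²)` as `h → 0`. -/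
theorem stmt8 {p c : ℕ} (hc : 2 ≤ c) (F f : ℝ → ℝ)
    (PX : Measure (Fin p → ℝ)) [IsProbabilityMeasure PX]
    (hA : Assm1 F f PX) :
    ∀ θ ∈ ParamSet p c,
      ∃ η : ((Fin p → ℝ) × Fin c) → ((Fin (c - 2) → ℝ) × (Fin p → ℝ)),
        Measurable η ∧
        (fun h : (Fin (c - 2) → ℝ) × (Fin p → ℝ) =>
            ∫ z, (Real.sqrt (cellP F p c (θ + h) z.1 z.2)
                  - Real.sqrt (cellP F p c θ z.1 z.2)
                  - (∑ i, h.1 i * (η z).1 i + ∑ j, h.2 j * (η z).2 j)) ^ 2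
              ∂(nuMeas PX c))
          =o[𝓝 0] (fun h => ‖h‖ ^ 2) :=
  stmt8_general F f PX hA
end
end
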